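/- Let N ≥ 1 be an integer and λ₁, …, λ_N real numbers, and let M_N be the lower-triangular N×N matrix with (M_N)_{ii} = −2λ_i, (M_N)_{ij} = 0 for i < j, and (M_N)_{ij} = −1 for i > j. Then for each k = 1, …, N, the k-th entry of the vector adj(M_N) · e equals (−2)^{N−k} · (∏_{i=1}^{k−1} (−2λ_i + 1)) · (∏_{i=k+1}^{N} λ_i), where adj denotes the adjugate matrix and e ∈ ℝ^N is the all-ones column vector. -/

import Mathlib

open Matrix

/-- The limiting lower-triangular matrix `M_N`: diagonal entries `-2λ_i`, zeros above
the diagonal and `-1` below it (indices shifted by one, from `Fin N` to `{1, …, N}`). -/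
noncomputable def GPMlim (N : ℕ) (lam : ℕ → ℝ) : Matrix (Fin N) (Fin N) ℝ :=
  Matrix.of fun i j =>
    if i = j then -2 * lam ((i : ℕ) + 1)
    else if i < j then 0
    else -1

/-!
Write `P k = ∏_{i ≤ k} (1 - 2λ_i)` and `Q m = ∏_{m ≤ i ≤ N} (-2λ_i)`, so that `det M_N = Q 1`
and the claimed `k`-th entry is `w_k = P (k-1) Q (k+1)`. Since
`P k Q (k+1) - P (k-1) Q k = w_k`, the partial sums of `w` telescope, and row `k` of `M_N w` is
`-2λ_k w_k - ∑_{j<k} w_j = P (k-1) Q k - (P (k-1) Q k - Q 1) = det M_N`. Hence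
`M_N w = det(M_N) e`, and multiplying by `adj M_N` gives `adj(M_N) e = w` whenever `det M_N` can
be cancelled. Both sides are polynomials in the `λ_i` with integer coefficients, so it suffices to
take `λ_i = X_i` in `ℤ[X_1, X_2, …]`, where `det M_N = ∏ (-2X_i) ≠ 0`.
-/

open Finset

theorem Matrix.adjugate_mulVec_eq_of_mulVec_eq_det_smul {n R : Type*} [Fintype n] [DecidableEq n]
    [CommRing R] [IsDomain R] {A : Matrix n n R} {b w : n → R} (hdet : A.det ≠ 0)
    (h : A *ᵥ w = A.det • b) : A.adjugate *ᵥ b = w := by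
  refine smul_right_injective (n → R) hdet ?_
  calc A.det • (A.adjugate *ᵥ b) = A.adjugate *ᵥ (A *ᵥ w) := by rw [h, mulVec_smul]
    _ = A.det • w := by rw [mulVec_mulVec, adjugate_mul, smul_mulVec, one_mulVec]

theorem Finset.prod_eq_prod_Icc_succ_bot {M : Type*} [CommMonoid M] {a b : ℕ} (hab : a ≤ b)
    (f : ℕ → M) : ∏ i ∈ Icc a b, f i = f a * ∏ i ∈ Icc (a + 1) b, f i := by
  rw [Icc_eq_cons_Ioc hab, prod_cons, Icc_add_one_left_eq_Ioc]

section GPMlimOver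

variable {R S : Type*} [CommRing R] [CommRing S] (N : ℕ) (lam : ℕ → R)

def GPMlimOver : Matrix (Fin N) (Fin N) R :=
  Matrix.of fun i j =>
    if i = j then -2 * lam ((i : ℕ) + 1)
    else if i < j then 0
    else -1

theorem GPMlimOver_apply (i j : Fin N) :
    GPMlimOver N lam i j =
      if (i : ℕ) = j then -2 * lam ((i : ℕ) + 1) else if (i : ℕ) < j then 0 else -1 := by
  simp only [GPMlimOver, of_apply, Fin.ext_iff, Fin.lt_def]

theorem map_GPMlimOver (f : R →+* S) : (GPMlimOver N lam).map f = GPMlimOver N (f ∘ lam) := by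
  ext i j
  simp only [GPMlimOver, map_apply, of_apply]
  split_ifs <;> simp [map_ofNat]

theorem det_GPMlimOver : (GPMlimOver N lam).det = ∏ i ∈ Icc 1 N, (-2 * lam i) := by
  have hlower : (GPMlimOver N lam).IsLowerTriangular := fun i j (hij : i < j) => by
    simp [GPMlimOver, hij, hij.ne]
  rw [det_of_isLowerTriangular _ hlower, ← Ico_add_one_right_eq_Icc, prod_Ico_eq_prod_range,
    ← Fin.prod_univ_eq_prod_range]
  simp [GPMlimOver, add_comm]

/-- The `k`-th entry of `adj(M_N) e`, with `k` counted from `0` as in `Fin N`. -/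
def adjOneEntry (k : ℕ) : R :=
  (∏ i ∈ Icc 1 k, (-2 * lam i + 1)) * ∏ i ∈ Icc (k + 2) N, (-2 * lam i)

theorem map_adjOneEntry (f : R →+* S) (k : ℕ) :
    f (adjOneEntry N lam k) = adjOneEntry N (f ∘ lam) k := by
  simp [adjOneEntry, map_prod, map_ofNat]

theorem sum_range_adjOneEntry {k : ℕ} (hk : k ≤ N) :
    ∑ j ∈ range k, adjOneEntry N lam j =
      (∏ i ∈ Icc 1 k, (-2 * lam i + 1)) * (∏ i ∈ Icc (k + 1) N, (-2 * lam i))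
        - ∏ i ∈ Icc 1 N, (-2 * lam i) := by
  set g : ℕ → R := fun m => (∏ i ∈ Icc 1 m, (-2 * lam i + 1)) * ∏ i ∈ Icc (m + 1) N, (-2 * lam i)
  have hstep : ∀ j ∈ range k, adjOneEntry N lam j = g (j + 1) - g j := fun j hj => by
    have hjN : j + 1 ≤ N := by have := mem_range.mp hj; omega
    simp only [g, adjOneEntry]
    rw [prod_eq_prod_Icc_succ_bot hjN, prod_Icc_succ_top (Nat.le_add_left 1 j)]
    simp only [Nat.add_assoc, Nat.reduceAdd]
    ring
  rw [sum_congr rfl hstep, sum_range_sub]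
  simp [g]

theorem GPMlimOver_mulVec_adjOneEntry :
    GPMlimOver N lam *ᵥ (fun k : Fin N => adjOneEntry N lam k) =
      (GPMlimOver N lam).det • fun _ => 1 := by
  ext ⟨k, hk⟩
  simp only [mulVec, dotProduct, GPMlimOver_apply]
  rw [Fin.sum_univ_eq_sum_range (fun j => (if k = j then -2 * lam (k + 1)
      else if k < j then 0 else -1) * adjOneEntry N lam j),
    ← sum_range_add_sum_Ico _ hk, sum_range_succ]
  have hbelow : ∑ j ∈ range k, (if k = j then -2 * lam (k + 1)
      else if k < j then 0 else -1) * adjOneEntry N lam j =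
        -∑ j ∈ range k, adjOneEntry N lam j := by
    rw [← sum_neg_distrib]
    refine sum_congr rfl fun j hj => ?_
    have hjk := mem_range.mp hj
    simp [hjk.ne', hjk.not_gt]
  have habove : ∑ j ∈ Ico (k + 1) N, (if k = j then -2 * lam (k + 1)
      else if k < j then 0 else -1) * adjOneEntry N lam j = 0 := by
    refine sum_eq_zero fun j hj => ?_
    have hkj : k < j := (mem_Ico.mp hj).1
    simp [hkj.ne, hkj]
  rw [hbelow, habove, sum_range_adjOneEntry N lam hk.le, prod_eq_prod_Icc_succ_bot hk,
    det_GPMlimOver, adjOneEntry]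
  simp only [if_pos, Pi.smul_apply, smul_eq_mul]
  ring

theorem adjugate_GPMlimOver_mulVec_one :
    (GPMlimOver N lam).adjugate *ᵥ (fun _ => 1) = fun k : Fin N => adjOneEntry N lam k := by
  open MvPolynomial in
  have hgeneric : (GPMlimOver N (X : ℕ → MvPolynomial ℕ ℤ)).adjugate *ᵥ (fun _ => 1) =
      fun k : Fin N => adjOneEntry N X k := by
    refine adjugate_mulVec_eq_of_mulVec_eq_det_smul ?_ (GPMlimOver_mulVec_adjOneEntry N X)
    rw [det_GPMlimOver]
    exact prod_ne_zero_iff.mpr fun i _ => mul_ne_zero (by norm_num) (X_ne_zero i)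
  set f := MvPolynomial.eval₂Hom (Int.castRingHom R) lam
  have hf : f ∘ MvPolynomial.X = lam := funext (MvPolynomial.eval₂Hom_X' _ _)
  ext k
  have hk := RingHom.map_mulVec f (GPMlimOver N MvPolynomial.X).adjugate (fun _ => 1) k
  rw [hgeneric, map_adjOneEntry, hf, ← RingHom.mapMatrix_apply, RingHom.map_adjugate,
    RingHom.mapMatrix_apply, map_GPMlimOver, hf] at hk
  simpa [Function.comp_def] using hk.symm

end GPMlimOver

theorem adjugate_GPMlim_mulVec_one_general (N : ℕ) (lam : ℕ → ℝ) :
    ∀ k : Fin N,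
      ((GPMlim N lam).adjugate *ᵥ fun _ : Fin N => (1 : ℝ)) k =
        (-2 : ℝ) ^ (N - ((k : ℕ) + 1)) *
          (∏ i ∈ Finset.Icc 1 (k : ℕ), (-2 * lam i + 1)) *
            (∏ i ∈ Finset.Icc ((k : ℕ) + 2) N, lam i) := by
  intro k
  have hcard : #(Icc ((k : ℕ) + 2) N) = N - ((k : ℕ) + 1) := by
    rw [Nat.card_Icc]; omega
  calc _ = adjOneEntry N lam k := congrFun (adjugate_GPMlimOver_mulVec_one N lam) k
    _ = _ := by rw [adjOneEntry, prod_mul_distrib, prod_const, hcard]; ring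

/-- The `k`-th entry of `adj(M_N) e` equals
`(-2)^{N-k} (∏_{i=1}^{k-1} (-2λ_i + 1)) (∏_{i=k+1}^{N} λ_i)`. -/
theorem adjugate_GPMlim_mulVec_one (N : ℕ) (hN : 1 ≤ N) (lam : ℕ → ℝ) :
    ∀ k : Fin N,
      ((GPMlim N lam).adjugate *ᵥ fun _ : Fin N => (1 : ℝ)) k =
        (-2 : ℝ) ^ (N - ((k : ℕ) + 1)) *
          (∏ i ∈ Finset.Icc 1 (k : ℕ), (-2 * lam i + 1)) *
            (∏ i ∈ Finset.Icc ((k : ℕ) + 2) N, lam i) :=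
  adjugate_GPMlim_mulVec_one_general N lam
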